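/- arXiv:2408.05619 — 4 statements merged into one kernel-verified Lean document; each statement's English description precedes it below -/
import Mathlib

section
/- For 0 < α < 1 and 0 < y < 1 - α², the quantity a₀(α,y) := π(1-α)/2 - arctan(√y/√(1-α²-y)) + α·arctan(α√y/√(1-α²-y)) equals arccos(√y/√(1-α²)) - (α/2)·arccos((y(1+α²) - (1-α²))/((1-α²)(1-y))). -/
theorem a0_eq (α y : ℝ) (hα0 : 0 < α) (hα1 : α < 1) (hy0 : 0 < y) (hy1 : y < 1 - α ^ 2) :
    Real.pi * (1 - α) / 2 - Real.arctan (Real.sqrt y / Real.sqrt (1 - α ^ 2 - y)) +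
        α * Real.arctan (α * Real.sqrt y / Real.sqrt (1 - α ^ 2 - y)) =
      Real.arccos (Real.sqrt y / Real.sqrt (1 - α ^ 2)) -
        (α / 2) * Real.arccos ((y * (1 + α ^ 2) - (1 - α ^ 2)) / ((1 - α ^ 2) * (1 - y))) := by
  have h1a : (0:ℝ) < 1 - α ^ 2 := by nlinarith
  have hry : 0 < 1 - α ^ 2 - y := by linarith
  have hy1' : y < 1 := by nlinarith
  set s := Real.sqrt y with hs
  set r := Real.sqrt (1 - α ^ 2 - y) with hr
  set q := Real.sqrt (1 - α ^ 2) with hq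
  have hspos : 0 < s := Real.sqrt_pos.mpr hy0
  have hrpos : 0 < r := Real.sqrt_pos.mpr hry
  have hqpos : 0 < q := Real.sqrt_pos.mpr h1a
  have hs2 : s ^ 2 = y := Real.sq_sqrt hy0.le
  have hr2 : r ^ 2 = 1 - α ^ 2 - y := Real.sq_sqrt hry.le
  have hq2 : q ^ 2 = 1 - α ^ 2 := Real.sq_sqrt h1a.le
  have hsq : s < q := by
    rw [hs, hq]
    exact Real.sqrt_lt_sqrt hy0.le (by linarith)
  -- part 1
  have key1 : Real.arccos (s / q) = Real.pi / 2 - Real.arctan (s / r) := by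
    rw [Real.arccos, Real.arcsin_eq_arctan ⟨by have := div_pos hspos hqpos; linarith, (div_lt_one hqpos).mpr hsq⟩]
    congr 2
    have h1x : 1 - (s/q)^2 = (r/q)^2 := by
      field_simp
      nlinarith
    rw [h1x, Real.sqrt_sq (by positivity)]
    field_simp
  -- part 2
  set u := α * s / r with hu
  have hupos : 0 < u := by positivity
  set θ := Real.arctan u with hθ
  have hθpos : 0 < θ := by
    rw [hθ, ← Real.arctan_zero]
    exact Real.arctan_strictMono hupos
  have hθlt : θ < Real.pi / 2 := Real.arctan_lt_pi_div_two u
  have hcos2 : Real.cos θ ^ 2 = 1 / (1 + u ^ 2) := Real.cos_sq_arctan u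
  have hzval : (y * (1 + α ^ 2) - (1 - α ^ 2)) / ((1 - α ^ 2) * (1 - y)) =
      Real.cos (Real.pi - 2 * θ) := by
    have hu2 : u ^ 2 = α ^ 2 * y / (1 - α ^ 2 - y) := by
      rw [hu, div_pow, mul_pow, hs2, hr2]
    have h1u : (0:ℝ) < 1 + u ^ 2 := by positivity
    have hrhs : Real.cos (Real.pi - 2 * θ) = (u ^ 2 - 1) / (u ^ 2 + 1) := by
      rw [Real.cos_pi_sub, Real.cos_two_mul, hcos2]
      field_simp
      ring
    rw [hrhs, div_eq_div_iff (by nlinarith : ((1:ℝ) - α ^ 2) * (1 - y) ≠ 0)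
      (by positivity : (u ^ 2 + 1 : ℝ) ≠ 0), hu2]
    field_simp
    ring
  have key2 : Real.arccos ((y * (1 + α ^ 2) - (1 - α ^ 2)) / ((1 - α ^ 2) * (1 - y))) =
      Real.pi - 2 * θ := by
    rw [hzval, Real.arccos_cos (by linarith) (by linarith)]
  rw [key1, key2]
  ring
end

section
/- For 0 < α < 1, the function a₀(α,y) = π(1-α)/2 - arctan(√y/√(1-α²-y)) + α·arctan(α√y/√(1-α²-y)) vanishes in the limit y → (1-α²)⁻, and admits the expansion a₀(α,y) = ((1-α²)(1-α²-y)^{3/2}/(3α² y^{3/2}))·(1 + O((1-α²-y)/α²)) as y → (1-α²)⁻. -/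
/-
With u = √(1-α²-y)/√y → 0⁺, the identity arctan t + arctan t⁻¹ = π/2 (t > 0) turns a₀ into
arctan u - α arctan (u/α). Since arctan x = x - x³/3 + o(x³) (L'Hôpital), this is
(1-α²)u³/(3α²) + o(u³), and u³ = (1-α²-y)^{3/2}/y^{3/2}.
-/

open Filter Set

/-- a₀(α,y) = π(1-α)/2 - arctan(√y/√(1-α²-y)) + α arctan(α√y/√(1-α²-y)). -/
noncomputable def a0 (α y : ℝ) : ℝ :=
  Real.pi * (1 - α) / 2 - Real.arctan (Real.sqrt y / Real.sqrt (1 - α ^ 2 - y)) +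
    α * Real.arctan (α * Real.sqrt y / Real.sqrt (1 - α ^ 2 - y))

open Real Topology

theorem tendsto_arctan_sub_self_div_pow_three :
    Tendsto (fun x => (arctan x - x) / x ^ 3) (𝓝[≠] 0) (𝓝 (-1 / 3)) := by
  refine HasDerivAt.lhopital_zero_nhdsNE (f' := fun x => 1 / (1 + x ^ 2) - 1)
    (g' := fun x => 3 * x ^ 2) ?_ ?_ ?_ ?_ ?_ ?_
  · exact .of_forall fun x => (hasDerivAt_arctan x).sub (hasDerivAt_id x)
  · exact .of_forall fun x => by simpa using hasDerivAt_pow 3 x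
  · filter_upwards [self_mem_nhdsWithin] with x (hx : x ≠ 0)
    positivity
  · exact tendsto_nhdsWithin_of_tendsto_nhds <|
      (continuous_arctan.sub continuous_id).tendsto' 0 0 (by simp)
  · exact tendsto_nhdsWithin_of_tendsto_nhds <| by simpa using (continuous_pow 3).tendsto (0 : ℝ)
  · have hlim : Tendsto (fun x : ℝ => -1 / (3 * (1 + x ^ 2))) (𝓝[≠] 0) (𝓝 (-1 / 3)) :=
      tendsto_nhdsWithin_of_tendsto_nhds <|
        (continuous_const.div (by fun_prop) fun x => by positivity).tendsto' 0 _ (by norm_num)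
    refine hlim.congr' ?_
    filter_upwards [self_mem_nhdsWithin] with x (hx : x ≠ 0)
    field_simp
    ring

theorem tendsto_arctan_sub_mul_arctan_div_div_pow_three {α : ℝ} (hα : α ≠ 0) :
    Tendsto (fun x => (arctan x - α * arctan (x / α)) / x ^ 3) (𝓝[≠] 0)
      (𝓝 ((1 - α ^ 2) / (3 * α ^ 2))) := by
  have hdiv : Tendsto (· / α) (𝓝[≠] (0 : ℝ)) (𝓝[≠] 0) := by
    refine tendsto_nhdsWithin_of_tendsto_nhds_of_eventually_within _ ?_ ?_
    · exact tendsto_nhdsWithin_of_tendsto_nhds <|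
        (continuous_id.div_const α).tendsto' 0 0 (zero_div α)
    · filter_upwards [self_mem_nhdsWithin] with x (hx : x ≠ 0)
      exact div_ne_zero hx hα
  have h := tendsto_arctan_sub_self_div_pow_three.sub
    ((tendsto_arctan_sub_self_div_pow_three.comp hdiv).div_const (α ^ 2))
  convert h using 1
  · funext x
    simp only [Function.comp_apply]
    by_cases hx : x = 0
    · simp [hx]
    field_simp
    ring
  · congr 1
    field_simp
    ring

theorem tendsto_sqrt_sub_div_sqrt {c : ℝ} (hc : 0 < c) :
    Tendsto (fun y => √(c - y) / √y) (𝓝[<] c) (𝓝[≠] 0) := by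
  refine tendsto_nhdsWithin_of_tendsto_nhds_of_eventually_within _ ?_ ?_
  · have hcont : ContinuousAt (fun y => √(c - y) / √y) c :=
      (by fun_prop : ContinuousAt (fun y => √(c - y)) c).div (by fun_prop) (sqrt_pos.mpr hc).ne'
    simpa using hcont.tendsto.mono_left nhdsWithin_le_nhds
  · filter_upwards [Ioo_mem_nhdsLT hc] with y ⟨hy0, hyc⟩
    exact (div_pos (sqrt_pos.mpr (sub_pos.mpr hyc)) (sqrt_pos.mpr hy0)).ne'

theorem a0_eq_arctan_sub_mul_arctan_div {α y : ℝ} (hα : 0 < α) (hy : 0 < y)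
    (hyα : y < 1 - α ^ 2) :
    a0 α y = arctan (√(1 - α ^ 2 - y) / √y) - α * arctan (√(1 - α ^ 2 - y) / √y / α) := by
  have hs : 0 < √y := sqrt_pos.mpr hy
  have ht : 0 < √(1 - α ^ 2 - y) := sqrt_pos.mpr (by linarith)
  have h₁ := arctan_inv_of_pos (div_pos ht hs)
  have h₂ := arctan_inv_of_pos (div_pos (div_pos ht hs) hα)
  rw [inv_div] at h₁
  rw [inv_div, div_div_eq_mul_div] at h₂
  rw [a0, h₁, h₂]
  ring

theorem a0_div_rpow_three_halves_eq {α y : ℝ} (hα : 0 < α) (hy : 0 < y)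
    (hyα : y < 1 - α ^ 2) :
    a0 α y / (1 - α ^ 2 - y) ^ ((3 : ℝ) / 2) =
      (arctan (√(1 - α ^ 2 - y) / √y) - α * arctan (√(1 - α ^ 2 - y) / √y / α)) /
        (√(1 - α ^ 2 - y) / √y) ^ 3 / √y ^ 3 := by
  have hs : 0 < √y := sqrt_pos.mpr hy
  rw [a0_eq_arctan_sub_mul_arctan_div hα hy hyα, rpow_div_two_eq_sqrt _ (by linarith)]
  norm_cast
  field_simp

theorem a0_vanishing_and_expansion (α : ℝ) (hα0 : 0 < α) (hα1 : α < 1) :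
    Tendsto (a0 α) (nhdsWithin (1 - α ^ 2) (Iio (1 - α ^ 2))) (nhds 0) ∧
    Tendsto (fun y => a0 α y / (1 - α ^ 2 - y) ^ ((3 : ℝ) / 2))
      (nhdsWithin (1 - α ^ 2) (Iio (1 - α ^ 2)))
      (nhds (1 / (3 * α ^ 2 * Real.sqrt (1 - α ^ 2)))) := by
  have hc : 0 < 1 - α ^ 2 := by nlinarith
  have hratio : Tendsto (fun y => a0 α y / (1 - α ^ 2 - y) ^ ((3 : ℝ) / 2))
      (𝓝[<] (1 - α ^ 2)) (𝓝 (1 / (3 * α ^ 2 * √(1 - α ^ 2)))) := by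
    have hcube : Tendsto (fun y => √y ^ 3) (𝓝[<] (1 - α ^ 2)) (𝓝 (√(1 - α ^ 2) ^ 3)) :=
      ((continuous_sqrt.pow 3).tendsto _).mono_left nhdsWithin_le_nhds
    have hlim : (1 - α ^ 2) / (3 * α ^ 2) / √(1 - α ^ 2) ^ 3 =
        1 / (3 * α ^ 2 * √(1 - α ^ 2)) := by
      rw [pow_succ _ 2, sq_sqrt hc.le]
      field_simp
    rw [← hlim]
    refine (((tendsto_arctan_sub_mul_arctan_div_div_pow_three hα0.ne').comp
      (tendsto_sqrt_sub_div_sqrt hc)).div hcube (by positivity)).congr' ?_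
    filter_upwards [Ioo_mem_nhdsLT hc] with y ⟨hy0, hyc⟩
    exact (a0_div_rpow_three_halves_eq hα0 hy0 hyc).symm
  have hpow : Tendsto (fun y => (1 - α ^ 2 - y) ^ ((3 : ℝ) / 2)) (𝓝[<] (1 - α ^ 2)) (𝓝 0) :=
    tendsto_nhdsWithin_of_tendsto_nhds <|
      ((continuous_const.sub continuous_id).rpow_const fun _ => Or.inr (by norm_num)).tendsto'
        _ _ (by simp)
  refine ⟨?_, hratio⟩
  rw [← mul_zero (1 / (3 * α ^ 2 * √(1 - α ^ 2)))]
  refine (hratio.mul hpow).congr' ?_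
  filter_upwards [self_mem_nhdsWithin] with y (hy : y < 1 - α ^ 2)
  exact div_mul_cancel₀ _ (rpow_pos_of_pos (by linarith) _).ne'
end

section
/- For 0 < α < 1, the map ζ ↦ √(ζ - α²) - α·arccos(α/√ζ) is a strictly increasing continuous bijection from [α², ∞) onto [0, ∞); consequently, for each 0 < y < 1-α² there is a unique ζ = ζ(y) ≥ α² with arccos(√y/√(1-α²)) - (α/2)·arccos((y(1+α²)-(1-α²))/((1-α²)(1-y))) = √(ζ-α²) - α·arccos(α/√ζ). -/
/-!
Substituting `y = (1 - α²) / (1 + t²)` turns the left-hand side into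
`arctan t - α * arctan (t / α)`, which is nonnegative because `arctan` is concave on `[0, ∞)`
and vanishes at `0`. The map `ζ ↦ √(ζ - α²) - α * arccos (α / √ζ)` has derivative
`√(ζ - α²) / (2ζ) > 0`, vanishes at `α²` and tends to `∞`, so it maps `[α², ∞)` bijectively
onto `[0, ∞)`.
-/

open Set Real Filter

theorem concaveOn_arctan : ConcaveOn ℝ (Ici 0) arctan := by
  refine AntitoneOn.concaveOn_of_deriv (convex_Ici 0) continuous_arctan.continuousOn
    differentiable_arctan.differentiableOn ?_
  rw [interior_Ici, Real.deriv_arctan]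
  intro x hx y _ hxy
  have hx : 0 < x := hx
  show 1 / (1 + y ^ 2) ≤ 1 / (1 + x ^ 2)
  gcongr

theorem mul_arctan_div_le_arctan {a t : ℝ} (ha0 : 0 < a) (ha1 : a ≤ 1) (ht : 0 ≤ t) :
    a * arctan (t / a) ≤ arctan t := by
  have h := concaveOn_arctan.2 (mem_Ici.2 (div_nonneg ht ha0.le)) self_mem_Ici ha0.le
    (sub_nonneg.2 ha1) (add_sub_cancel a 1)
  simpa [mul_div_cancel₀ t ha0.ne'] using h

theorem arccos_one_sub_sq_div_one_add_sq {x : ℝ} (hx : 0 ≤ x) :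
    arccos ((1 - x ^ 2) / (1 + x ^ 2)) = 2 * arctan x := by
  have hcos : cos (2 * arctan x) = (1 - x ^ 2) / (1 + x ^ 2) := by
    rw [cos_two_mul, cos_arctan, div_pow, sq_sqrt (by positivity)]
    field_simp
    ring
  rw [← hcos, arccos_cos (by positivity [arctan_nonneg.2 hx])]
  linarith [arctan_lt_pi_div_two x]

theorem exists_eq_div_one_add_sq {c y : ℝ} (hy0 : 0 < y) (hyc : y ≤ c) :
    ∃ t, 0 ≤ t ∧ y = c / (1 + t ^ 2) := by
  refine ⟨√(c / y - 1), sqrt_nonneg _, ?_⟩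
  have hc : c ≠ 0 := (hy0.trans_le hyc).ne'
  rw [sq_sqrt (by rw [sub_nonneg, le_div_iff₀ hy0]; linarith), add_sub_cancel, div_div_cancel₀ hc]

/-- The left-hand side `a₀(α, y)` of the paper. -/
noncomputable def a₀ (α y : ℝ) : ℝ :=
  arccos (√y / √(1 - α ^ 2)) -
    (α / 2) * arccos ((y * (1 + α ^ 2) - (1 - α ^ 2)) / ((1 - α ^ 2) * (1 - y)))

theorem a₀_div_one_add_sq {α t : ℝ} (hα0 : 0 < α) (hα1 : α < 1) (ht : 0 ≤ t) :
    a₀ α ((1 - α ^ 2) / (1 + t ^ 2)) = arctan t - α * arctan (t / α) := by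
  have hβ : 0 < 1 - α ^ 2 := by nlinarith
  have hfirst : √((1 - α ^ 2) / (1 + t ^ 2)) / √(1 - α ^ 2) = (√(1 + t ^ 2))⁻¹ := by
    rw [sqrt_div' _ (by positivity), div_div_cancel_left' (sqrt_pos.2 hβ).ne']
  have hsecond : ((1 - α ^ 2) / (1 + t ^ 2) * (1 + α ^ 2) - (1 - α ^ 2)) /
      ((1 - α ^ 2) * (1 - (1 - α ^ 2) / (1 + t ^ 2))) = (1 - (t / α) ^ 2) / (1 + (t / α) ^ 2) := by
    have hden : 1 - (1 - α ^ 2) / (1 + t ^ 2) = (α ^ 2 + t ^ 2) / (1 + t ^ 2) := by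
      field_simp
      ring
    have : α ^ 2 + t ^ 2 ≠ 0 := by positivity
    rw [hden]
    field_simp
    ring
  rw [a₀, hfirst, hsecond, ← arctan_eq_arccos ht,
    arccos_one_sub_sq_div_one_add_sq (div_nonneg ht hα0.le)]
  ring

theorem a₀_nonneg {α y : ℝ} (hα0 : 0 < α) (hα1 : α < 1) (hy0 : 0 < y) (hy1 : y < 1 - α ^ 2) :
    0 ≤ a₀ α y := by
  obtain ⟨t, ht, rfl⟩ := exists_eq_div_one_add_sq hy0 hy1.le
  rw [a₀_div_one_add_sq hα0 hα1 ht, sub_nonneg]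
  exact mul_arctan_div_le_arctan hα0 hα1.le ht

noncomputable def zetaMap (α ζ : ℝ) : ℝ := √(ζ - α ^ 2) - α * arccos (α / √ζ)

theorem hasDerivAt_zetaMap {α ζ : ℝ} (hζ : α ^ 2 < ζ) :
    HasDerivAt (zetaMap α) (√(ζ - α ^ 2) / (2 * ζ)) ζ := by
  have hζ0 : 0 < ζ := (sq_nonneg α).trans_lt hζ
  set s := √ζ
  set r := √(ζ - α ^ 2)
  have hs : 0 < s := sqrt_pos.2 hζ0
  have hr : 0 < r := sqrt_pos.2 (sub_pos.2 hζ)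
  have hs2 : s ^ 2 = ζ := sq_sqrt hζ0.le
  have hr2 : r ^ 2 = ζ - α ^ 2 := sq_sqrt (sub_pos.2 hζ).le
  have hαs : |α / s| < 1 := by
    rw [abs_div, abs_of_pos hs, div_lt_one hs]
    exact abs_lt_of_sq_lt_sq (hs2 ▸ hζ) hs.le
  have hsqrt : HasDerivAt (fun ζ => √(ζ - α ^ 2)) (1 / (2 * r)) ζ :=
    ((hasDerivAt_id ζ).sub_const _).sqrt (sub_pos.2 hζ).ne'
  have hquot : HasDerivAt (fun ζ => α / √ζ) ((0 * s - α * (1 / (2 * s))) / s ^ 2) ζ :=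
    (hasDerivAt_const ζ α).div ((hasDerivAt_id ζ).sqrt hζ0.ne') hs.ne'
  have harccos := (hasDerivAt_arccos (x := α / s) (by linarith [neg_abs_le (α / s)])
    (by linarith [le_abs_self (α / s)])).comp ζ hquot
  have hcos : √(1 - (α / s) ^ 2) = r / s := by
    rw [← sqrt_sq (div_pos hr hs).le, div_pow, div_pow, hr2, hs2]
    congr 1
    field_simp
  refine (hsqrt.sub (harccos.const_mul α)).congr_deriv ?_
  rw [hcos]
  field_simp
  linear_combination α ^ 2 * hs2 - s ^ 2 * hr2

theorem continuousOn_zetaMap {α : ℝ} (hα : α ≠ 0) : ContinuousOn (zetaMap α) (Ici (α ^ 2)) := by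
  refine (continuous_sqrt.comp (continuous_sub_right _)).continuousOn.sub
    (continuousOn_const.mul (continuous_arccos.comp_continuousOn
      (continuousOn_const.div continuous_sqrt.continuousOn fun ζ hζ => ?_)))
  exact (sqrt_pos.2 ((by positivity : 0 < α ^ 2).trans_le hζ)).ne'

theorem strictMonoOn_zetaMap {α : ℝ} (hα : α ≠ 0) : StrictMonoOn (zetaMap α) (Ici (α ^ 2)) := by
  refine strictMonoOn_of_deriv_pos (convex_Ici _) (continuousOn_zetaMap hα) fun ζ hζ => ?_
  rw [interior_Ici] at hζ
  have hζ0 : 0 < ζ := (sq_nonneg α).trans_lt hζ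
  rw [(hasDerivAt_zetaMap hζ).deriv]
  exact div_pos (sqrt_pos.2 (sub_pos.2 hζ)) (by positivity)

theorem zetaMap_sq {α : ℝ} (hα : 0 < α) : zetaMap α (α ^ 2) = 0 := by
  rw [zetaMap, sub_self, sqrt_zero, sqrt_sq hα.le, div_self hα.ne', arccos_one, mul_zero, sub_zero]

theorem tendsto_zetaMap_atTop {α : ℝ} (hα : 0 ≤ α) : Tendsto (zetaMap α) atTop atTop := by
  refine tendsto_atTop_mono (fun ζ => ?_) (tendsto_atTop_add_const_right _ (-(α * π))
    (tendsto_sqrt_atTop.comp (tendsto_atTop_add_const_right _ (-α ^ 2) tendsto_id)))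
  have := mul_le_mul_of_nonneg_left (arccos_le_pi (α / √ζ)) hα
  simp only [Function.comp_apply, id, zetaMap, ← sub_eq_add_neg]
  linarith

theorem image_zetaMap {α : ℝ} (hα : 0 < α) : zetaMap α '' Ici (α ^ 2) = Ici 0 := by
  refine Subset.antisymm ?_ ?_
  · rintro _ ⟨ζ, hζ, rfl⟩
    exact zetaMap_sq hα ▸ (strictMonoOn_zetaMap hα.ne').monotoneOn self_mem_Ici hζ hζ
  · simpa only [zetaMap_sq hα] using
      intermediate_value_Ici (continuousOn_zetaMap hα.ne') (tendsto_zetaMap_atTop hα.le)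

theorem zeta_map_bijection (α : ℝ) (hα0 : 0 < α) (hα1 : α < 1) :
    StrictMonoOn (fun ζ : ℝ => Real.sqrt (ζ - α ^ 2) - α * Real.arccos (α / Real.sqrt ζ))
      (Ici (α ^ 2)) ∧
    ContinuousOn (fun ζ : ℝ => Real.sqrt (ζ - α ^ 2) - α * Real.arccos (α / Real.sqrt ζ))
      (Ici (α ^ 2)) ∧
    (fun ζ : ℝ => Real.sqrt (ζ - α ^ 2) - α * Real.arccos (α / Real.sqrt ζ)) '' Ici (α ^ 2) =
      Ici 0 ∧
    ∀ y : ℝ, 0 < y → y < 1 - α ^ 2 →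
      ∃! ζ : ℝ, α ^ 2 ≤ ζ ∧
        Real.arccos (Real.sqrt y / Real.sqrt (1 - α ^ 2)) -
            (α / 2) * Real.arccos ((y * (1 + α ^ 2) - (1 - α ^ 2)) / ((1 - α ^ 2) * (1 - y))) =
          Real.sqrt (ζ - α ^ 2) - α * Real.arccos (α / Real.sqrt ζ) := by
  have hmono := strictMonoOn_zetaMap hα0.ne'
  refine ⟨hmono, continuousOn_zetaMap hα0.ne', image_zetaMap hα0, fun y hy0 hy1 => ?_⟩
  obtain ⟨ζ, hζ, hζy⟩ : a₀ α y ∈ zetaMap α '' Ici (α ^ 2) := by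
    rw [image_zetaMap hα0]
    exact a₀_nonneg hα0 hα1 hy0 hy1
  exact ⟨ζ, ⟨hζ, hζy.symm⟩, fun ζ' ⟨hζ', hζ'y⟩ => hmono.injOn hζ' hζ (hζ'y.symm.trans hζy.symm)⟩
end

section
/- For 0 < α < 1 and y ∈ (0, 1-α²), the function a₀(α,y) = π(1-α)/2 - arctan(√y/√(1-α²-y)) + α·arctan(α√y/√(1-α²-y)) is strictly decreasing in y and positive on (0, 1-α²). -/
/-! With `t = √y / √(1 - α² - y)`, which increases strictly on `(0, 1 - α²)`, one has
`a₀(α, y) = π(1 - α)/2 - arctan t + α arctan (α t)`. The derivative in `t` of the right-hand side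
is `(α² - 1) / ((1 + t²)(1 + α² t²)) < 0`, and it tends to `0` as `t → ∞`; a strictly decreasing
function with limit `0` at infinity is positive. -/

open Set

open Filter Topology

theorem StrictAnti.pos_of_tendsto_atTop_zero {α β : Type*} [LinearOrder α] [NoMaxOrder α]
    [TopologicalSpace β] [LinearOrder β] [OrderClosedTopology β] [Zero β] {f : α → β}
    (hf : StrictAnti f) (h0 : Tendsto f atTop (𝓝 0)) (x : α) : 0 < f x := by
  obtain ⟨y, hxy⟩ := exists_gt x
  exact (hf.antitone.le_of_tendsto h0 y).trans_lt (hf hxy)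

theorem strictMonoOn_sqrt_div_sqrt_sub (c : ℝ) :
    StrictMonoOn (fun y => √y / √(c - y)) (Ico 0 c) := by
  intro y₁ hy₁ y₂ hy₂ h
  have hnum : √y₁ < √y₂ := Real.sqrt_lt_sqrt hy₁.1 h
  have hden₂ : 0 < √(c - y₂) := Real.sqrt_pos.mpr (sub_pos.mpr hy₂.2)
  have hden : √(c - y₂) ≤ √(c - y₁) := Real.sqrt_le_sqrt (by linarith)
  exact div_lt_div₀ hnum hden (Real.sqrt_nonneg _) hden₂

noncomputable def arctanProfile (α t : ℝ) : ℝ :=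
  Real.pi * (1 - α) / 2 - Real.arctan t + α * Real.arctan (α * t)

theorem hasDerivAt_arctanProfile (α t : ℝ) :
    HasDerivAt (arctanProfile α) ((α ^ 2 - 1) / ((1 + t ^ 2) * (1 + (α * t) ^ 2))) t := by
  have hinner : HasDerivAt (fun t => Real.arctan (α * t)) (1 / (1 + (α * t) ^ 2) * α) t :=
    (Real.hasDerivAt_arctan (α * t)).comp t ((hasDerivAt_id t).const_mul α) |>.congr_deriv
      (by simp)
  refine ((hasDerivAt_const t (Real.pi * (1 - α) / 2)).sub (Real.hasDerivAt_arctan t)).add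
    (hinner.const_mul α) |>.congr_deriv ?_
  field_simp
  ring

theorem arctanProfile_strictAnti {α : ℝ} (hα : α ^ 2 < 1) : StrictAnti (arctanProfile α) :=
  strictAnti_of_hasDerivAt_neg (hasDerivAt_arctanProfile α) fun t =>
    div_neg_of_neg_of_pos (by linarith) (by positivity)

theorem tendsto_arctanProfile_atTop {α : ℝ} (hα : 0 < α) :
    Tendsto (arctanProfile α) atTop (𝓝 0) := by
  have harctan : Tendsto Real.arctan atTop (𝓝 (Real.pi / 2)) :=
    Real.tendsto_arctan_atTop.mono_right nhdsWithin_le_nhds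
  have hscaled := harctan.comp (tendsto_id.const_mul_atTop hα)
  have hlim := ((tendsto_const_nhds (x := Real.pi * (1 - α) / 2)).sub harctan).add
    (hscaled.const_mul α)
  rwa [show Real.pi * (1 - α) / 2 - Real.pi / 2 + α * (Real.pi / 2) = 0 by ring] at hlim

theorem a0_eq_arctanProfile (α y : ℝ) : a0 α y = arctanProfile α (√y / √(1 - α ^ 2 - y)) := by
  simp only [a0, arctanProfile, mul_div_assoc]

theorem a0_strictAnti_pos (α : ℝ) (hα0 : 0 < α) (hα1 : α < 1) :
    StrictAntiOn (a0 α) (Ioo 0 (1 - α ^ 2)) ∧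
    ∀ y ∈ Ioo (0 : ℝ) (1 - α ^ 2), 0 < a0 α y := by
  have hprofile := arctanProfile_strictAnti (α := α) (by nlinarith)
  refine ⟨fun y₁ hy₁ y₂ hy₂ h => ?_, fun y _ => ?_⟩
  · rw [a0_eq_arctanProfile, a0_eq_arctanProfile]
    exact hprofile <| strictMonoOn_sqrt_div_sqrt_sub _
      (Ioo_subset_Ico_self hy₁) (Ioo_subset_Ico_self hy₂) h
  · rw [a0_eq_arctanProfile]
    exact hprofile.pos_of_tendsto_atTop_zero (tendsto_arctanProfile_atTop hα0) _
end
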